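/- Let X be a complex Banach space, t₀ ∈ ℝ, and U : ℝ → B(X) differentiable at t₀ with derivative U′, such that U(t₀) is invertible in B(X) and U(t₀) commutes with U′. Let η ∈ ℂ, η ≠ 0, be such that 1 − η⁻¹U(t) is invertible in B(X) for all t, write I_η := (1 − η⁻¹U(t₀))⁻¹, let D ∈ B(X) be the derivative of t ↦ (1 − η⁻¹U(t))⁻¹ at t₀, and assume I_η − 1 and I_η² − I_η are invertible in B(X). Then the infinitesimal generator A := U′ ∘ U(t₀)⁻¹ satisfies A = (I_η − 1)⁻¹ ∘ D − I_η⁻¹ ∘ D = (I_η² − I_η)⁻¹ ∘ D. -/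

import Mathlib

/-!
Put `w = η⁻¹ U(t₀)`, `V = 1 - w` and `I = V⁻¹`. Differentiating the inverse gives
`D = I (η⁻¹ U') I`, while `I² - I = I (I - 1) = I I w`. Since `U'` commutes with `w`, hence with
`V`, we get `(I² - I)⁻¹ D = w⁻¹ V (η⁻¹ U') V⁻¹ = U' U(t₀)⁻¹`. The first identity then follows from
the partial fraction decomposition `(I - 1)⁻¹ - I⁻¹ = (I² - I)⁻¹`.
-/

open Ring

section Ring

variable {R : Type*} [Ring R]

theorem Ring.inverse_sub_one_sub_inverse {x : R} (hx : IsUnit x) (hx₁ : IsUnit (x - 1)) :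
    (x - 1)⁻¹ʳ - x⁻¹ʳ = (x ^ 2 - x)⁻¹ʳ := by
  rw [sq, ← mul_sub_one, inverse_mul (.inl hx)]
  calc (x - 1)⁻¹ʳ - x⁻¹ʳ
      = (x - 1)⁻¹ʳ * x * x⁻¹ʳ - (x - 1)⁻¹ʳ * (x - 1) * x⁻¹ʳ := by
        rw [mul_inverse_cancel_right _ _ hx, inverse_mul_cancel _ hx₁, one_mul]
    _ = (x - 1)⁻¹ʳ * x⁻¹ʳ := by noncomm_ring

theorem Units.inv_sub_one_of_add_eq_one {u v : Rˣ} (h : (u : R) + v = 1) :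
    (↑v⁻¹ : R) - 1 = ↑(v⁻¹ * u) :=
  calc (↑v⁻¹ : R) - 1 = ↑v⁻¹ * (1 - v) := by rw [mul_sub, mul_one, Units.inv_mul]
    _ = ↑(v⁻¹ * u) := by rw [← h, add_sub_cancel_right, Units.val_mul]

theorem Units.inv_sq_sub_inv_of_add_eq_one {u v : Rˣ} (h : (u : R) + v = 1) :
    (↑v⁻¹ : R) ^ 2 - ↑v⁻¹ = ↑(v⁻¹ * (v⁻¹ * u)) := by
  rw [sq, ← mul_sub_one, inv_sub_one_of_add_eq_one h, Units.val_mul v⁻¹ (v⁻¹ * u)]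

theorem Commute.mul_inverse_eq_inverse_sq_sub_mul {w a : R} (hw : IsUnit w)
    (hv : IsUnit (1 - w)) (hwa : Commute w a) :
    a * w⁻¹ʳ = ((1 - w)⁻¹ʳ ^ 2 - (1 - w)⁻¹ʳ)⁻¹ʳ * ((1 - w)⁻¹ʳ * a * (1 - w)⁻¹ʳ) := by
  obtain ⟨u, rfl⟩ := hw
  obtain ⟨v, hv⟩ := hv
  have huv : (u : R) + v = 1 := by rw [hv]; abel
  have hva : Commute (v : R) a := hv ▸ (Commute.one_left a).sub_left hwa
  rw [← hv, inverse_unit, inverse_unit, Units.inv_sq_sub_inv_of_add_eq_one huv, inverse_unit]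
  simp only [mul_inv_rev, inv_inv, Units.val_mul, mul_assoc, Units.mul_inv_cancel_left]
  rw [← mul_assoc (v : R), hva.eq, mul_assoc, Units.mul_inv, mul_one, hwa.units_inv_left.eq]

end Ring

theorem Ring.inverse_smul {𝕜 R : Type*} [Field 𝕜] [Ring R] [Algebra 𝕜 R] {c : 𝕜} (hc : c ≠ 0)
    (a : R) : (c • a)⁻¹ʳ = c⁻¹ • a⁻¹ʳ := by
  by_cases ha : IsUnit a
  · obtain ⟨u, rfl⟩ := ha
    rw [inverse_unit]
    simpa [Units.smul_def] using inverse_unit (Units.mk0 c hc • u)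
  · have hca : ¬IsUnit (c • a) := fun h => ha ((isUnit_smul_iff (Units.mk0 c hc) a).mp h)
    rw [inverse_non_unit _ ha, inverse_non_unit _ hca, smul_zero]

theorem HasDerivAt.ringInverse {𝕜 R : Type*} [NontriviallyNormedField 𝕜] [NormedRing R]
    [HasSummableGeomSeries R] [NormedAlgebra 𝕜 R] {f : 𝕜 → R} {f' : R} {x : 𝕜}
    (hf : HasDerivAt f f' x) (hx : IsUnit (f x)) :
    HasDerivAt (fun t => (f t)⁻¹ʳ) (-((f x)⁻¹ʳ * f' * (f x)⁻¹ʳ)) x := by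
  obtain ⟨u, hu⟩ := hx
  have := (hu ▸ hasFDerivAt_ringInverse (𝕜 := 𝕜) u).comp_hasDerivAt x hf
  simpa [← hu, Function.comp_def] using this

theorem stmt_14_general {X : Type*} [NormedAddCommGroup X] [NormedSpace ℂ X] [CompleteSpace X]
    (t₀ : ℝ) (U : ℝ → X →L[ℂ] X) (U' : X →L[ℂ] X)
    (hU : HasDerivAt U U' t₀) (hUinv : IsUnit (U t₀))
    (hcomm : U t₀ * U' = U' * U t₀)
    (η : ℂ) (hη : η ≠ 0)
    (hres : ∀ t : ℝ, IsUnit (1 - η⁻¹ • U t))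
    (Iη : X →L[ℂ] X) (hIη : Iη = Ring.inverse (1 - η⁻¹ • U t₀))
    (D : X →L[ℂ] X)
    (hD : HasDerivAt (fun t => Ring.inverse (1 - η⁻¹ • U t)) D t₀)
    (h1 : IsUnit (Iη - 1)) :
    U' * Ring.inverse (U t₀) = Ring.inverse (Iη - 1) * D - Ring.inverse Iη * D ∧
    U' * Ring.inverse (U t₀) = Ring.inverse (Iη ^ 2 - Iη) * D := by
  have hD' : D = Iη * (η⁻¹ • U') * Iη := by
    have hderiv := ((hU.const_smul η⁻¹).const_sub 1).ringInverse (hres t₀)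
    rw [hD.unique hderiv, hIη]
    simp only [Pi.smul_apply, mul_neg, neg_mul, neg_neg]
  have hA : U' * Ring.inverse (U t₀) = (η⁻¹ • U') * Ring.inverse (η⁻¹ • U t₀) := by
    rw [Ring.inverse_smul (inv_ne_zero hη), smul_mul_smul_comm, inv_inv, inv_mul_cancel₀ hη,
      one_smul]
  have hw : IsUnit (η⁻¹ • U t₀) := hUinv.smul (Units.mk0 η⁻¹ (inv_ne_zero hη))
  have hgen := Commute.mul_inverse_eq_inverse_sq_sub_mul hw (hres t₀)
    ((Commute.smul_left hcomm η⁻¹).smul_right η⁻¹)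
  rw [← hIη, ← hD', ← hA] at hgen
  rw [← sub_mul, Ring.inverse_sub_one_sub_inverse (hIη ▸ (hres t₀).ringInverse) h1]
  exact ⟨hgen, hgen⟩

/-- the simplified core of the logarithmic representations: the infinitesimal
generator `A = U' ∘ U(t₀)⁻¹` satisfies
`A = (Iη - 1)⁻¹ D - Iη⁻¹ D = (Iη² - Iη)⁻¹ D`. -/
theorem stmt_14 {X : Type*} [NormedAddCommGroup X] [NormedSpace ℂ X] [CompleteSpace X]
    (t₀ : ℝ) (U : ℝ → X →L[ℂ] X) (U' : X →L[ℂ] X)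
    (hU : HasDerivAt U U' t₀) (hUinv : IsUnit (U t₀))
    (hcomm : U t₀ * U' = U' * U t₀)
    (η : ℂ) (hη : η ≠ 0)
    (hres : ∀ t : ℝ, IsUnit (1 - η⁻¹ • U t))
    (Iη : X →L[ℂ] X) (hIη : Iη = Ring.inverse (1 - η⁻¹ • U t₀))
    (D : X →L[ℂ] X)
    (hD : HasDerivAt (fun t => Ring.inverse (1 - η⁻¹ • U t)) D t₀)
    (h1 : IsUnit (Iη - 1)) (h2 : IsUnit (Iη ^ 2 - Iη)) :
    U' * Ring.inverse (U t₀) = Ring.inverse (Iη - 1) * D - Ring.inverse Iη * D ∧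
    U' * Ring.inverse (U t₀) = Ring.inverse (Iη ^ 2 - Iη) * D :=
  stmt_14_general t₀ U U' hU hUinv hcomm η hη hres Iη hIη D hD h1
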